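/- Let φ be an alternating p-form of comass one on a finite-dimensional real inner product space V. If A is a skew-adjoint endomorphism of V (i.e. ⟨A v, w⟩ = −⟨v, A w⟩ for all v, w ∈ V), then λ_φ(A)(e₁,…,e_p) = 0 for every φ-plane (e₁,…,e_p) ∈ G(φ). (Corollary 2.6) -/
import Mathlib


open scoped RealInnerProductSpace

noncomputable section

variable {V : Type*} [NormedAddCommGroup V] [InnerProductSpace ℝ V] [FiniteDimensional ℝ V]

/-- `λ_φ(A)`, the action of the endomorphism `A` on the alternating `p`-form `φ` as a
derivation: `λ_φ(A)(v₁,…,v_p) = Σ_k φ(v₁,…,A v_k,…,v_p)`. -/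
def lambdaForm {p : ℕ} (φ : V [⋀^Fin p]→ₗ[ℝ] ℝ) (A : V →ₗ[ℝ] V) (v : Fin p → V) : ℝ :=
  ∑ k, φ (Function.update v k (A (v k)))

/-- Key lemma: if `w` is orthogonal to all the `e i`, then replacing one slot of a
`φ`-plane by `w` gives value `0`. -/
lemma phi_update_orthogonal_eq_zero {p : ℕ} (φ : V [⋀^Fin p]→ₗ[ℝ] ℝ)
    (hcomass : ∀ e : Fin p → V, Orthonormal ℝ e → φ e ≤ 1)
    (e : Fin p → V) (he : Orthonormal ℝ e) (heφ : φ e = 1)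
    (k : Fin p) (w : V) (hw : ∀ i, ⟪e i, w⟫ = 0) :
    φ (Function.update e k w) = 0 := by
  rcases eq_or_ne w 0 with rfl | hw0
  · simp
  set u : V := (‖w‖ : ℝ)⁻¹ • w with hu
  have hun : ‖u‖ = 1 := norm_smul_inv_norm hw0
  have huu : ⟪u, u⟫ = 1 := by rw [real_inner_self_eq_norm_sq, hun]; norm_num
  have heu : ∀ i, ⟪e i, u⟫ = 0 := fun i => by
    simp [hu, inner_smul_right, hw i]
  have hue : ∀ i, ⟪u, e i⟫ = 0 := fun i => by
    rw [real_inner_comm]; exact heu i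
  rw [orthonormal_iff_ite] at he
  set c : ℝ := φ (Function.update e k u) with hc
  have hkey : ∀ t : ℝ, Real.cos t + c * Real.sin t ≤ 1 := by
    intro t
    set x : V := Real.cos t • e k + Real.sin t • u with hx
    have hxx : ⟪x, x⟫ = 1 := by
      rw [hx]
      simp only [inner_add_left, inner_add_right, real_inner_smul_left, real_inner_smul_right]
      rw [he k k, heu k, hue k, huu]
      norm_num
      nlinarith [Real.cos_sq_add_sin_sq t]
    have hxe : ∀ j, j ≠ k → ⟪x, e j⟫ = 0 := by
      intro j hjk
      rw [hx]
      simp only [inner_add_left, real_inner_smul_left]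
      rw [he k j, hue j, if_neg (Ne.symm hjk)]
      ring
    have hex : ∀ i, i ≠ k → ⟪e i, x⟫ = 0 := by
      intro i hik
      rw [hx]
      simp only [inner_add_right, real_inner_smul_right]
      rw [he i k, heu i, if_neg hik]
      ring
    have horth : Orthonormal ℝ (Function.update e k x) := by
      rw [orthonormal_iff_ite]
      intro i j
      by_cases hik : i = k
      · by_cases hjk : j = k
        · subst hik; subst hjk
          rw [Function.update_self, if_pos rfl]
          exact hxx
        · subst hik
          rw [Function.update_self, Function.update_of_ne hjk, if_neg (Ne.symm hjk),
            hxe j hjk]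
      · by_cases hjk : j = k
        · subst hjk
          rw [Function.update_self, Function.update_of_ne hik, if_neg hik, hex i hik]
        · rw [Function.update_of_ne hik, Function.update_of_ne hjk, he i j]
    have hle := hcomass _ horth
    have hval : φ (Function.update e k x) = Real.cos t + c * Real.sin t := by
      rw [hx]
      rw [φ.map_update_add, φ.map_update_smul, φ.map_update_smul,
        Function.update_eq_self, heφ]
      simp [hc, smul_eq_mul, mul_comm]
    linarith [hval ▸ hle]
  have hc0 : c = 0 := by
    have h := hkey (Real.arctan c)
    rw [Real.cos_arctan, Real.sin_arctan] at h
    have hs : (0:ℝ) < Real.sqrt (1 + c ^ 2) := Real.sqrt_pos.mpr (by positivity)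
    have hs2 : Real.sqrt (1 + c ^ 2) ^ 2 = 1 + c ^ 2 := Real.sq_sqrt (by positivity)
    have h' : (1 + c ^ 2) / Real.sqrt (1 + c ^ 2) ≤ 1 := by
      calc (1 + c ^ 2) / Real.sqrt (1 + c ^ 2)
          = 1 / Real.sqrt (1 + c ^ 2) + c * (c / Real.sqrt (1 + c ^ 2)) := by ring
        _ ≤ 1 := h
    rw [div_le_one hs] at h'
    nlinarith
  have hwu : w = (‖w‖ : ℝ) • u := by
    rw [hu, smul_smul, mul_inv_cancel₀ (norm_ne_zero_iff.mpr hw0), one_smul]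
  calc φ (Function.update e k w) = φ (Function.update e k ((‖w‖ : ℝ) • u)) := by rw [← hwu]
    _ = (‖w‖ : ℝ) • φ (Function.update e k u) := φ.map_update_smul e k _ u
    _ = 0 := by rw [← hc, hc0, smul_zero]

/-- Corollary 2.6: if `φ` has comass one and `A` is a skew-adjoint endomorphism of `V`,
then the `p`-form `λ_φ(A)` vanishes on every `φ`-plane. -/
theorem lambdaForm_skew_vanishes_on_phiPlanes {p : ℕ} (hp : 1 ≤ p)
    (φ : V [⋀^Fin p]→ₗ[ℝ] ℝ)
    (hcomass : ∀ e : Fin p → V, Orthonormal ℝ e → φ e ≤ 1)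
    (A : V →ₗ[ℝ] V) (hA : ∀ v w : V, ⟪A v, w⟫ = -⟪v, A w⟫)
    (e : Fin p → V) (he : Orthonormal ℝ e) (heφ : φ e = 1) :
    lambdaForm φ A e = 0 := by
  have hite := orthonormal_iff_ite.mp he
  rw [lambdaForm]
  apply Finset.sum_eq_zero
  intro k _
  -- linear map in slot k
  set L : V →ₗ[ℝ] ℝ := φ.toMultilinearMap.toLinearMap e k with hL
  have hLdef : ∀ x : V, L x = φ (Function.update e k x) := fun x => rfl
  set w : V := A (e k) - ∑ j, ⟪e j, A (e k)⟫ • e j with hwdef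
  have hwperp : ∀ i, ⟪e i, w⟫ = 0 := by
    intro i
    rw [hwdef, inner_sub_right, inner_sum]
    rw [Finset.sum_eq_single i]
    · rw [real_inner_smul_right, hite i i, if_pos rfl, mul_one, sub_self]
    · intro j _ hj
      rw [real_inner_smul_right, hite i j, if_neg (Ne.symm hj), mul_zero]
    · intro h; exact absurd (Finset.mem_univ i) h
  have hsplit : A (e k) = w + ∑ j, ⟪e j, A (e k)⟫ • e j := by
    rw [hwdef, sub_add_cancel]
  rw [← hLdef, hsplit, map_add, map_sum]
  have hterm : ∀ j, L (⟪e j, A (e k)⟫ • e j) = 0 := by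
    intro j
    rw [map_smul, smul_eq_mul]
    rcases eq_or_ne j k with rfl | hjk
    · have : ⟪e j, A (e j)⟫ = 0 := by
        have h1 := hA (e j) (e j)
        have h2 : ⟪A (e j), e j⟫ = ⟪e j, A (e j)⟫ := real_inner_comm _ _
        linarith [h1, h2.symm ▸ h1]
      rw [this, zero_mul]
    · have : L (e j) = 0 := by
        rw [hLdef]
        exact φ.map_eq_zero_of_eq _ (by
          rw [Function.update_self, Function.update_of_ne hjk]) hjk
      rw [this, mul_zero]
  rw [Finset.sum_congr rfl (fun j _ => hterm j), Finset.sum_const, smul_zero, add_zero]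
  rw [hLdef]
  exact phi_update_orthogonal_eq_zero φ hcomass e he heφ k w hwperp
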